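/- arXiv:1312.0098 — 3 statements merged into one kernel-verified Lean document; each statement's English description precedes it below -/
import Mathlib

section
/- Let k ≥ 2 and let n_1, n_2, ..., n_k be integers with each n_i ≥ 2, and let G = P_{n_1} □ P_{n_2} □ ... □ P_{n_k} be the iterated Cartesian product of paths, where P_{n_i} denotes the path on n_i vertices. Then rx_3(G) = (Σ_{i=1}^{k} n_i) − k. -/
open SimpleGraph

/-- An edge coloring `c` of `G` is a 3-rainbow coloring if every set of at most three
vertices is contained in a rainbow tree of `G`, formalized as a connected subgraph of `G`
on whose edge set the coloring `c` is injective. -/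
def IsRainbowColoring3 {V : Type*} (G : SimpleGraph V) (c : Sym2 V → ℕ) : Prop :=
  ∀ S : Set V, S.ncard ≤ 3 →
    ∃ T : G.Subgraph, T.Connected ∧ S ⊆ T.verts ∧ Set.InjOn c T.edgeSet

/-- The 3-rainbow index `rx₃(G)`: the minimum number of colors in a 3-rainbow coloring. -/
noncomputable def rx3 {V : Type*} (G : SimpleGraph V) : ℕ :=
  sInf {n | ∃ c : Sym2 V → ℕ, (∀ e ∈ G.edgeSet, c e < n) ∧ IsRainbowColoring3 G c}

/-- The Steiner distance of a vertex set `S` of `G`: the minimum number of edges of a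
tree (connected subgraph) of `G` containing `S`. -/
noncomputable def steinerDist {V : Type*} (G : SimpleGraph V) (S : Set V) : ℕ :=
  sInf {n | ∃ T : G.Subgraph, T.Connected ∧ S ⊆ T.verts ∧ T.edgeSet.ncard = n}

/-- The 3-Steiner diameter of `G`: the maximum Steiner distance over vertex sets of
at most 3 vertices. -/
noncomputable def sdiam3 {V : Type*} (G : SimpleGraph V) : ℕ :=
  sSup {n | ∃ S : Set V, S.ncard ≤ 3 ∧ steinerDist G S = n}

/-- The rainbow connection number `rc(G)`: the minimum number of colors in an edge coloring
of `G` such that every two vertices are joined by a path whose edges all receive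
distinct colors. -/
noncomputable def rcIndex {V : Type*} (G : SimpleGraph V) : ℕ :=
  sInf {n | ∃ c : Sym2 V → ℕ, (∀ e ∈ G.edgeSet, c e < n) ∧
    ∀ u v : V, ∃ p : G.Walk u v, p.IsPath ∧ (p.edges.map c).Nodup}

/-- The lexicographic product `G[H]` of simple graphs. -/
def lexProd {α β : Type*} (G : SimpleGraph α) (H : SimpleGraph β) :
    SimpleGraph (α × β) where
  Adj x y := G.Adj x.1 y.1 ∨ (x.1 = y.1 ∧ H.Adj x.2 y.2)
  symm := by
    constructor
    rintro x y (h | ⟨h1, h2⟩)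
    · exact Or.inl h.symm
    · exact Or.inr ⟨h1.symm, h2.symm⟩
  loopless := by
    constructor
    rintro x (h | ⟨-, h⟩)
    · exact G.loopless.irrefl _ h
    · exact H.loopless.irrefl _ h

/-- The strong product `G ⊠ H` of simple graphs. -/
def strongProd {α β : Type*} (G : SimpleGraph α) (H : SimpleGraph β) :
    SimpleGraph (α × β) where
  Adj x y := x ≠ y ∧ (x.1 = y.1 ∨ G.Adj x.1 y.1) ∧ (x.2 = y.2 ∨ H.Adj x.2 y.2)
  symm := by
    constructor
    rintro x y ⟨hne, h1, h2⟩
    exact ⟨hne.symm, h1.imp Eq.symm (fun h => h.symm), h2.imp Eq.symm (fun h => h.symm)⟩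
  loopless := ⟨fun x h => h.1 rfl⟩

/-- The join `G ∨ H` of two simple graphs: the disjoint union of `G` and `H` together
with all edges joining a vertex of `G` to a vertex of `H`. -/
def joinGraph {α β : Type*} (G : SimpleGraph α) (H : SimpleGraph β) :
    SimpleGraph (α ⊕ β) where
  Adj x y :=
    match x, y with
    | Sum.inl a, Sum.inl b => G.Adj a b
    | Sum.inr a, Sum.inr b => H.Adj a b
    | Sum.inl _, Sum.inr _ => True
    | Sum.inr _, Sum.inl _ => True
  symm := by
    constructor
    rintro (a | a) (b | b) h
    · exact h.symm
    · trivial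
    · trivial
    · exact h.symm
  loopless := by
    constructor
    rintro (a | a) h
    · exact G.loopless.irrefl a h
    · exact H.loopless.irrefl a h

/-- The Cartesian product `G₁ □ G₂ □ ⋯ □ G_k` of a family of simple graphs
(the Cartesian product is associative, so this is the iterated Cartesian product). -/
def boxProdFamily {k : ℕ} {V : Fin k → Type*} (G : ∀ i, SimpleGraph (V i)) :
    SimpleGraph (∀ i, V i) where
  Adj x y := ∃ i, (G i).Adj (x i) (y i) ∧ ∀ j, j ≠ i → x j = y j
  symm := by
    constructor
    rintro x y ⟨i, hadj, heq⟩
    exact ⟨i, hadj.symm, fun j hj => (heq j hj).symm⟩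
  loopless := by
    constructor
    rintro x ⟨i, hadj, -⟩
    exact (G i).loopless.irrefl _ hadj


namespace Rx3GridAux

variable {k : ℕ} {n : Fin k → ℕ}

/-- Vertices of the grid. -/
abbrev Vtx (n : Fin k → ℕ) := ∀ i, Fin (n i)

/-- The grid graph. -/
abbrev Grid (n : Fin k → ℕ) : SimpleGraph (Vtx n) :=
  boxProdFamily fun i => SimpleGraph.pathGraph (n i)

lemma grid_adj {a b : Vtx n} :
    (Grid n).Adj a b ↔ ∃ i, ((a i).val + 1 = (b i).val ∨ (b i).val + 1 = (a i).val) ∧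
      ∀ j, j ≠ i → a j = b j := by
  constructor
  · rintro ⟨i, hadj, h⟩
    exact ⟨i, (SimpleGraph.pathGraph_adj).mp hadj, h⟩
  · rintro ⟨i, hadj, h⟩
    exact ⟨i, (SimpleGraph.pathGraph_adj).mpr hadj, h⟩

/-- Offset for direction `i` in the color code. -/
def base (n : Fin k → ℕ) (i : Fin k) : ℕ :=
  ∑ j ∈ Finset.univ.filter fun j => j < i, (n j - 1)

/-- Total number of colors. -/
def NN (n : Fin k → ℕ) : ℕ := ∑ i, (n i - 1)

lemma base_add_le (i : Fin k) : base n i + (n i - 1) ≤ NN n := by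
  classical
  have h : base n i + (n i - 1) =
      ∑ j ∈ insert i (Finset.univ.filter fun j => j < i), (n j - 1) := by
    rw [Finset.sum_insert (by simp), base, Nat.add_comm]
  rw [h, NN]
  exact Finset.sum_le_sum_of_subset (by intro j _; exact Finset.mem_univ j)

lemma base_mono {i i' : Fin k} (h : i < i') : base n i + (n i - 1) ≤ base n i' := by
  classical
  have h1 : base n i + (n i - 1) =
      ∑ j ∈ insert i (Finset.univ.filter fun j => j < i), (n j - 1) := by
    rw [Finset.sum_insert (by simp), base, Nat.add_comm]
  rw [h1, base]
  apply Finset.sum_le_sum_of_subset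
  intro j hj
  rcases Finset.mem_insert.mp hj with rfl | hj
  · simp [h]
  · simp only [Finset.mem_filter, Finset.mem_univ, true_and] at hj ⊢
    exact hj.trans h

lemma code_inj {i i' : Fin k} {t t' : ℕ} (ht : t < n i - 1) (ht' : t' < n i' - 1)
    (h : base n i + t = base n i' + t') : i = i' ∧ t = t' := by
  rcases lt_trichotomy i i' with hlt | rfl | hlt
  · have := base_mono (n := n) hlt; omega
  · constructor <;> omega
  · have := base_mono (n := n) hlt; omega

/-- The coloring as a function of two endpoints. -/
def col (n : Fin k → ℕ) (a b : Vtx n) : ℕ :=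
  ∑ i, if a i ≠ b i then base n i + min (a i).val (b i).val else 0

/-- The edge coloring. -/
def colC (n : Fin k → ℕ) : Sym2 (Vtx n) → ℕ :=
  Sym2.lift ⟨col n, by
    intro a b
    refine Finset.sum_congr rfl fun i _ => ?_
    by_cases h : a i = b i
    · simp [h]
    · simp [h, Ne.symm h, Nat.min_comm]⟩

lemma col_eq {a b : Vtx n} {i : Fin k} (hne : a i ≠ b i) (ho : ∀ j, j ≠ i → a j = b j) :
    col n a b = base n i + min (a i).val (b i).val := by
  rw [col, Finset.sum_eq_single i]
  · simp [hne]
  · intro j _ hj; simp [ho j hj]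
  · intro h; exact absurd (Finset.mem_univ i) h

section WithHn

variable (hn : ∀ i, 2 ≤ n i)

/-- Lower endpoint of the canonical cut edge. -/
def vert (a b : Vtx n) (i : Fin k) (t : ℕ) : Vtx n := fun j =>
  if h : j = i then ⟨t % n j, Nat.mod_lt _ (by have := hn j; omega)⟩
  else if j < i then b j else a j

/-- The canonical edge of cut `(i, t)` for the walk from `a` to `b`. -/
def Ee (a b : Vtx n) (i : Fin k) (t : ℕ) : Sym2 (Vtx n) :=
  s(vert hn a b i t, vert hn a b i (t + 1))

lemma vert_at (a b : Vtx n) (i : Fin k) (t : ℕ) (ht : t < n i) :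
    (vert hn a b i t i).val = t := by
  rw [vert, dif_pos rfl]
  exact Nat.mod_eq_of_lt ht

lemma vert_ne (a b : Vtx n) (i : Fin k) (t : ℕ) {j : Fin k} (hj : j ≠ i) :
    vert hn a b i t j = if j < i then b j else a j := by
  rw [vert, dif_neg hj]

lemma col_Ee (a b : Vtx n) (i : Fin k) (t : ℕ) (ht : t + 1 < n i) :
    colC n (Ee hn a b i t) = base n i + t := by
  have h1 := vert_at hn a b i t (by omega)
  have h2 := vert_at hn a b i (t + 1) ht
  have hne : vert hn a b i t i ≠ vert hn a b i (t + 1) i := by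
    intro h; rw [Fin.ext_iff, h1, h2] at h; omega
  have ho : ∀ j, j ≠ i → vert hn a b i t j = vert hn a b i (t + 1) j := by
    intro j hj; rw [vert_ne hn a b i t hj, vert_ne hn a b i (t + 1) hj]
  rw [Ee, colC, Sym2.lift_mk]
  show col n _ _ = _
  rw [col_eq hne ho, h1, h2]
  omega

/-- Distance in the grid (used as a termination measure). -/
def dst (a b : Vtx n) : ℕ := ∑ i, (max (a i).val (b i).val - min (a i).val (b i).val)

lemma exists_walk : ∀ (d : ℕ) (a b : Vtx n), dst a b ≤ d →
    ∃ w : (Grid n).Walk a b, ∀ e ∈ w.edges, ∃ (i : Fin k) (t : ℕ),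
      (min (a i).val (b i).val ≤ t ∧ t < max (a i).val (b i).val) ∧ e = Ee hn a b i t := by
  classical
  intro d
  induction d with
  | zero =>
    intro a b hd
    have hab : a = b := by
      funext i
      have h0 := Finset.sum_eq_zero_iff.mp (Nat.le_zero.mp hd) i (Finset.mem_univ i)
      exact Fin.ext (by omega)
    subst hab
    exact ⟨SimpleGraph.Walk.nil, by simp⟩
  | succ d ih =>
    intro a b hd
    by_cases hab : a = b
    · subst hab; exact ⟨SimpleGraph.Walk.nil, by simp⟩
    · have hne : (Finset.univ.filter fun i => a i ≠ b i).Nonempty := by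
        rw [Finset.filter_nonempty_iff]
        by_contra h
        push_neg at h
        exact hab (funext fun i => h i (Finset.mem_univ i))
      set i := (Finset.univ.filter fun i => a i ≠ b i).min' hne with hidef
      have hi : a i ≠ b i :=
        (Finset.mem_filter.mp ((Finset.univ.filter fun i => a i ≠ b i).min'_mem hne)).2
      have hleast : ∀ j, j < i → a j = b j := by
        intro j hj
        by_contra hja
        exact absurd (Finset.min'_le _ j (Finset.mem_filter.mpr ⟨Finset.mem_univ _, hja⟩))
          (not_le.mpr hj)
      have hbi := (b i).isLt
      have hai := (a i).isLt
      have hvne : (a i).val ≠ (b i).val := fun h => hi (Fin.ext h)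
      set ai' : Fin (n i) := if h : (a i).val < (b i).val then ⟨(a i).val + 1, by omega⟩
        else ⟨(a i).val - 1, by omega⟩ with hai'
      have hai'spec : ((a i).val < (b i).val ∧ ai'.val = (a i).val + 1) ∨
          ((b i).val < (a i).val ∧ ai'.val = (a i).val - 1) := by
        rw [hai']; split
        next h => exact Or.inl ⟨h, rfl⟩
        next h => exact Or.inr ⟨by omega, rfl⟩
      set a' := Function.update a i ai' with ha'def
      have ha'i : a' i = ai' := Function.update_self _ _ _
      have ha'j : ∀ j, j ≠ i → a' j = a j := fun j hj => Function.update_of_ne hj _ _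
      have hadj : (Grid n).Adj a a' := by
        rw [grid_adj]
        refine ⟨i, ?_, fun j hj => (ha'j j hj).symm⟩
        rw [ha'i]; omega
      have hdec : dst a' b < dst a b := by
        rw [dst, dst]
        apply Finset.sum_lt_sum
        · intro j _
          by_cases hj : j = i
          · subst hj; rw [ha'i]; omega
          · rw [ha'j j hj]
        · exact ⟨i, Finset.mem_univ i, by rw [ha'i]; omega⟩
      obtain ⟨w', hw'⟩ := ih a' b (by omega)
      refine ⟨SimpleGraph.Walk.cons hadj w', ?_⟩
      intro e he
      rw [SimpleGraph.Walk.edges_cons, List.mem_cons] at he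
      rcases he with rfl | he
      · -- head edge
        have hvo : ∀ (s : ℕ) (j : Fin k), j ≠ i → vert hn a b i s j = a j := by
          intro s j hj
          rw [vert_ne hn a b i s hj]
          split
          · exact (hleast j (by assumption)).symm
          · rfl
        rcases hai'spec with ⟨hlt, hval⟩ | ⟨hlt, hval⟩
        · -- ascending: vert t = a, vert (t+1) = a'
          refine ⟨i, (a i).val, ⟨by omega, by omega⟩, ?_⟩
          have e1 : vert hn a b i (a i).val = a := by
            funext j
            by_cases hj : j = i
            · subst hj; exact Fin.ext (vert_at hn a b i (a i).val hai)
            · exact hvo (a i).val j hj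
          have e2 : vert hn a b i ((a i).val + 1) = a' := by
            funext j
            by_cases hj : j = i
            · subst hj
              refine Fin.ext ?_
              rw [vert_at hn a b i _ (by omega), ha'i, hval]
            · rw [hvo ((a i).val + 1) j hj, ha'j j hj]
          rw [Ee, e1, e2]
        · -- descending: vert t = a', vert (t+1) = a
          refine ⟨i, (a i).val - 1, ⟨by omega, by omega⟩, ?_⟩
          have e1 : vert hn a b i ((a i).val - 1) = a' := by
            funext j
            by_cases hj : j = i
            · subst hj
              refine Fin.ext ?_
              rw [vert_at hn a b i _ (by omega), ha'i, hval]
            · rw [hvo ((a i).val - 1) j hj, ha'j j hj]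
          have e2 : vert hn a b i ((a i).val - 1 + 1) = a := by
            funext j
            by_cases hj : j = i
            · subst hj
              refine Fin.ext ?_
              rw [vert_at hn a b i _ (by omega)]
              omega
            · exact hvo ((a i).val - 1 + 1) j hj
          rw [Ee, e1, e2, Sym2.eq_swap]
      · -- tail edges
        obtain ⟨i', t', ⟨hl, hr⟩, rfl⟩ := hw' e he
        have hno : a' i' ≠ b i' := by
          intro hq
          rw [Fin.ext_iff] at hq
          omega
        have hii : ¬ i' < i := by
          intro hlt
          exact hno (by rw [ha'j i' (ne_of_lt hlt)]; exact hleast i' hlt)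
        have hile : i ≤ i' := not_lt.mp hii
        have hEeq : Ee hn a' b i' t' = Ee hn a b i' t' := by
          have hv : ∀ s : ℕ, vert hn a' b i' s = vert hn a b i' s := by
            intro s
            funext j
            by_cases hj : j = i'
            · subst hj; rw [vert, vert]; simp
            · rw [vert_ne hn a' b i' s hj, vert_ne hn a b i' s hj]
              split
              · rfl
              · rename_i hjlt
                have hji' : j ≠ i := by
                  intro hji
                  apply hjlt
                  rw [hji]
                  exact lt_of_le_of_ne hile (by rw [← hji]; exact hj)
                exact ha'j j hji'
          rw [Ee, Ee, hv t', hv (t' + 1)]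
        refine ⟨i', t', ?_, hEeq ▸ rfl⟩
        rcases eq_or_ne i' i with rfl | hii'
        · rw [ha'i] at hl hr
          omega
        · rw [ha'j i' hii'] at hl hr
          exact ⟨hl, hr⟩

/-- Median of three naturals. -/
def med3 (a b c : ℕ) : ℕ := max (min a b) (min (max a b) c)

lemma colC_lt : ∀ e ∈ (Grid n).edgeSet, colC n e < NN n := by
  intro e he
  induction e with
  | _ a b =>
    rw [SimpleGraph.mem_edgeSet, grid_adj] at he
    obtain ⟨i, hv, ho⟩ := he
    have hne : a i ≠ b i := by
      intro h; rw [Fin.ext_iff] at h; omega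
    have := base_add_le (n := n) i
    have h1 := (a i).isLt
    have h2 := (b i).isLt
    have : colC n s(a, b) = base n i + min (a i).val (b i).val := by
      rw [colC, Sym2.lift_mk]
      exact col_eq hne ho
    rw [this]
    have := base_add_le (n := n) i
    omega

lemma ee_lt_of_interval {mm u : Vtx n} {i : Fin k} {t : ℕ}
    (h : t < max (mm i).val (u i).val) : t + 1 < n i := by
  have h1 := (mm i).isLt
  have h2 := (u i).isLt
  omega

/-- key injectivity: two canonical edges from walks out of `mm` with equal colors. -/
lemma inj_same {mm u : Vtx n} {i i' : Fin k} {t t' : ℕ}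
    (h1 : min (mm i).val (u i).val ≤ t ∧ t < max (mm i).val (u i).val)
    (h2 : min (mm i').val (u i').val ≤ t' ∧ t' < max (mm i').val (u i').val)
    (hc : colC n (Ee hn mm u i t) = colC n (Ee hn mm u i' t')) :
    Ee hn mm u i t = Ee hn mm u i' t' := by
  rw [col_Ee hn mm u i t (ee_lt_of_interval h1.2),
    col_Ee hn mm u i' t' (ee_lt_of_interval h2.2)] at hc
  have hni := (mm i).isLt; have hni' := (mm i').isLt
  have hui := (u i).isLt; have hui' := (u i').isLt
  obtain ⟨rfl, rfl⟩ := code_inj (by omega) (by omega) hc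
  rfl

lemma inj_pair {mm u v : Vtx n} {i i' : Fin k} {t t' : ℕ}
    (hbet : min (u i).val (v i).val ≤ (mm i).val ∧ (mm i).val ≤ max (u i).val (v i).val)
    (h1 : min (mm i).val (u i).val ≤ t ∧ t < max (mm i).val (u i).val)
    (h2 : min (mm i').val (v i').val ≤ t' ∧ t' < max (mm i').val (v i').val)
    (hc : colC n (Ee hn mm u i t) = colC n (Ee hn mm v i' t')) : False := by
  rw [col_Ee hn mm u i t (ee_lt_of_interval h1.2),
    col_Ee hn mm v i' t' (ee_lt_of_interval h2.2)] at hc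
  have hni := (mm i).isLt; have hni' := (mm i').isLt
  have hui := (u i).isLt; have hvi' := (v i').isLt
  obtain ⟨rfl, rfl⟩ := code_inj (by omega) (by omega) hc
  omega

end WithHn

section WithHn2

variable (hn : ∀ i, 2 ≤ n i)

include hn in
lemma rainbow : IsRainbowColoring3 (Grid n) (colC n) := by
  classical
  intro S hS
  have hbotex : Vtx n := fun i => ⟨0, by have := hn i; omega⟩
  obtain ⟨x, y, z, hsub⟩ : ∃ x y z : Vtx n, S ⊆ {x, y, z} := by
    have hfin : S.Finite := Set.toFinite S
    rcases Nat.lt_or_ge S.ncard 1 with h | h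
    · have hS0 : S = ∅ := (Set.ncard_eq_zero hfin).mp (show S.ncard = 0 by omega)
      exact ⟨hbotex, hbotex, hbotex, by simp [hS0]⟩
    rcases Nat.lt_or_ge S.ncard 2 with h2 | h2
    · obtain ⟨a, rfl⟩ := Set.ncard_eq_one.mp (show S.ncard = 1 by omega)
      exact ⟨a, a, a, by simp⟩
    rcases Nat.lt_or_ge S.ncard 3 with h3 | h3
    · obtain ⟨a, b, -, rfl⟩ := Set.ncard_eq_two.mp (show S.ncard = 2 by omega)
      refine ⟨a, b, b, ?_⟩
      intro s hs
      rcases hs with rfl | rfl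
      · exact Set.mem_insert _ _
      · exact Set.mem_insert_of_mem _ (Set.mem_insert _ _)
    · obtain ⟨a, b, c, -, -, -, rfl⟩ := Set.ncard_eq_three.mp (le_antisymm hS h3)
      exact ⟨a, b, c, subset_rfl⟩
  have hmlt : ∀ i, med3 (x i).val (y i).val (z i).val < n i := by
    intro i
    have h1 := (x i).isLt; have h2 := (y i).isLt; have h3 := (z i).isLt
    rw [med3]; omega
  set m : Vtx n := fun i => ⟨med3 (x i).val (y i).val (z i).val, hmlt i⟩ with hmdef
  have hmv : ∀ i, (m i).val = med3 (x i).val (y i).val (z i).val := fun i => rfl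
  obtain ⟨w1, hw1⟩ := exists_walk hn (dst m x) m x le_rfl
  obtain ⟨w2, hw2⟩ := exists_walk hn (dst m y) m y le_rfl
  obtain ⟨w3, hw3⟩ := exists_walk hn (dst m z) m z le_rfl
  refine ⟨w1.toSubgraph ⊔ w2.toSubgraph ⊔ w3.toSubgraph, ?_, ?_, ?_⟩
  · refine SimpleGraph.Subgraph.connected_sup
      (SimpleGraph.Subgraph.connected_sup w1.toSubgraph_connected.preconnected
        w2.toSubgraph_connected.preconnected
        ⟨m, w1.start_mem_verts_toSubgraph, w2.start_mem_verts_toSubgraph⟩).preconnected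
      w3.toSubgraph_connected.preconnected
      ⟨m, Or.inl w1.start_mem_verts_toSubgraph, w3.start_mem_verts_toSubgraph⟩
  · intro s hs
    rcases hsub hs with rfl | rfl | rfl
    · exact Or.inl (Or.inl w1.end_mem_verts_toSubgraph)
    · exact Or.inl (Or.inr w2.end_mem_verts_toSubgraph)
    · exact Or.inr w3.end_mem_verts_toSubgraph
  · intro e he e' he' hce
    have hmem : ∀ {ee : Sym2 (Vtx n)},
        ee ∈ (w1.toSubgraph ⊔ w2.toSubgraph ⊔ w3.toSubgraph).edgeSet →
        ee ∈ w1.edges ∨ ee ∈ w2.edges ∨ ee ∈ w3.edges := by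
      intro ee h
      rw [SimpleGraph.Subgraph.edgeSet_sup, SimpleGraph.Subgraph.edgeSet_sup] at h
      rcases h with (h | h) | h
      · exact Or.inl ((SimpleGraph.Walk.mem_edges_toSubgraph w1).mp h)
      · exact Or.inr (Or.inl ((SimpleGraph.Walk.mem_edges_toSubgraph w2).mp h))
      · exact Or.inr (Or.inr ((SimpleGraph.Walk.mem_edges_toSubgraph w3).mp h))
    have hbxy : ∀ i, min (x i).val (y i).val ≤ (m i).val ∧
        (m i).val ≤ max (x i).val (y i).val := by
      intro i; rw [hmv i, med3]; omega
    have hbxz : ∀ i, min (x i).val (z i).val ≤ (m i).val ∧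
        (m i).val ≤ max (x i).val (z i).val := by
      intro i; rw [hmv i, med3]; omega
    have hbyz : ∀ i, min (y i).val (z i).val ≤ (m i).val ∧
        (m i).val ≤ max (y i).val (z i).val := by
      intro i; rw [hmv i, med3]; omega
    have hbyx : ∀ i, min (y i).val (x i).val ≤ (m i).val ∧
        (m i).val ≤ max (y i).val (x i).val := by
      intro i; rw [hmv i, med3]; omega
    have hbzx : ∀ i, min (z i).val (x i).val ≤ (m i).val ∧
        (m i).val ≤ max (z i).val (x i).val := by
      intro i; rw [hmv i, med3]; omega
    have hbzy : ∀ i, min (z i).val (y i).val ≤ (m i).val ∧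
        (m i).val ≤ max (z i).val (y i).val := by
      intro i; rw [hmv i, med3]; omega
    rcases hmem he with h1 | h1 | h1 <;> rcases hmem he' with h2 | h2 | h2
    · obtain ⟨i, t, hi, rfl⟩ := hw1 e h1
      obtain ⟨i', t', hi', rfl⟩ := hw1 e' h2
      exact inj_same hn hi hi' hce
    · obtain ⟨i, t, hi, rfl⟩ := hw1 e h1
      obtain ⟨i', t', hi', rfl⟩ := hw2 e' h2
      exact absurd hce fun hce => inj_pair hn (hbxy i) hi hi' hce
    · obtain ⟨i, t, hi, rfl⟩ := hw1 e h1
      obtain ⟨i', t', hi', rfl⟩ := hw3 e' h2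
      exact absurd hce fun hce => inj_pair hn (hbxz i) hi hi' hce
    · obtain ⟨i, t, hi, rfl⟩ := hw2 e h1
      obtain ⟨i', t', hi', rfl⟩ := hw1 e' h2
      exact absurd hce fun hce => inj_pair hn (hbyx i) hi hi' hce
    · obtain ⟨i, t, hi, rfl⟩ := hw2 e h1
      obtain ⟨i', t', hi', rfl⟩ := hw2 e' h2
      exact inj_same hn hi hi' hce
    · obtain ⟨i, t, hi, rfl⟩ := hw2 e h1
      obtain ⟨i', t', hi', rfl⟩ := hw3 e' h2
      exact absurd hce fun hce => inj_pair hn (hbyz i) hi hi' hce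
    · obtain ⟨i, t, hi, rfl⟩ := hw3 e h1
      obtain ⟨i', t', hi', rfl⟩ := hw1 e' h2
      exact absurd hce fun hce => inj_pair hn (hbzx i) hi hi' hce
    · obtain ⟨i, t, hi, rfl⟩ := hw3 e h1
      obtain ⟨i', t', hi', rfl⟩ := hw2 e' h2
      exact absurd hce fun hce => inj_pair hn (hbzy i) hi hi' hce
    · obtain ⟨i, t, hi, rfl⟩ := hw3 e h1
      obtain ⟨i', t', hi', rfl⟩ := hw3 e' h2
      exact inj_same hn hi hi' hce

end WithHn2

lemma cut_edge {T : (Grid n).Subgraph} (i : Fin k) (t : ℕ) :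
    ∀ {A B : T.verts} (_ : T.coe.Walk A B), ((A : Vtx n) i).val ≤ t →
      t < ((B : Vtx n) i).val →
      ∃ a b : Vtx n, T.Adj a b ∧ (a i).val = t ∧ (b i).val = t + 1 ∧ ∀ j, j ≠ i → a j = b j := by
  intro A B p
  induction p with
  | nil => intro h1 h2; omega
  | @cons u v w h p ih =>
    intro h1 h2
    by_cases hv : ((v : Vtx n) i).val ≤ t
    · exact ih hv h2
    · have hadj : T.Adj (u : Vtx n) (v : Vtx n) := h
      have hG := T.adj_sub hadj
      rw [grid_adj] at hG
      obtain ⟨j, hj1, hj2⟩ := hG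
      have hji : j = i := by
        by_contra hne
        have := hj2 i (Ne.symm hne)
        rw [Fin.ext_iff] at this
        omega
      subst hji
      refine ⟨(u : Vtx n), (v : Vtx n), hadj, by omega, by omega, hj2⟩

lemma lower (hn : ∀ i, 2 ≤ n i) (m : ℕ)
    (h : ∃ c : Sym2 (Vtx n) → ℕ, (∀ e ∈ (Grid n).edgeSet, c e < m) ∧
      IsRainbowColoring3 (Grid n) c) : NN n ≤ m := by
  classical
  obtain ⟨c, hb, hr⟩ := h
  set bot : Vtx n := fun i => ⟨0, by have := hn i; omega⟩ with hbot
  set top : Vtx n := fun i => ⟨n i - 1, by have := hn i; omega⟩ with htop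
  obtain ⟨T, hc, hsub, hinj⟩ := hr {bot, top} (by
    have h1 : ({bot, top} : Set (Vtx n)).ncard ≤ 2 := by
      have := Set.ncard_insert_le bot ({top} : Set (Vtx n))
      simpa using this
    omega)
  have hbotm : bot ∈ T.verts := hsub (Set.mem_insert _ _)
  have htopm : top ∈ T.verts := hsub (Set.mem_insert_of_mem _ rfl)
  obtain ⟨p⟩ := hc.coe.preconnected ⟨bot, hbotm⟩ ⟨top, htopm⟩
  have cut : ∀ (i : Fin k) (t : ℕ), t < n i - 1 →
      ∃ a b : Vtx n, T.Adj a b ∧ (a i).val = t ∧ (b i).val = t + 1 ∧ ∀ j, j ≠ i → a j = b j := by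
    intro i t ht
    refine cut_edge i t p ?_ ?_
    · show (bot i).val ≤ t
      simp [hbot]
    · show t < (top i).val
      simp [htop]
      omega
  have cut' : ∀ (i : Fin k) (t : ℕ), ∃ a b : Vtx n, t < n i - 1 →
      T.Adj a b ∧ (a i).val = t ∧ (b i).val = t + 1 ∧ ∀ j, j ≠ i → a j = b j := by
    intro i t
    by_cases ht : t < n i - 1
    · obtain ⟨a, b, h1, h2, h3, h4⟩ := cut i t ht
      exact ⟨a, b, fun _ => ⟨h1, h2, h3, h4⟩⟩
    · exact ⟨bot, bot, fun hc => absurd hc ht⟩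
  choose fa fb hspec using cut'
  have hFmem : ∀ (i : Fin k) (t : Fin (n i - 1)),
      s(fa i t.val, fb i t.val) ∈ T.edgeSet := fun i t =>
    SimpleGraph.Subgraph.mem_edgeSet.mpr (hspec i t.val t.isLt).1
  set F : (Σ i : Fin k, Fin (n i - 1)) → ↥T.edgeSet :=
    fun σ => ⟨s(fa σ.1 σ.2.val, fb σ.1 σ.2.val), hFmem σ.1 σ.2⟩ with hF
  have hFinj : Function.Injective F := by
    rintro ⟨i, t⟩ ⟨i', t'⟩ hEq
    have hEq' : s(fa i t.val, fb i t.val) = s(fa i' t'.val, fb i' t'.val) :=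
      congrArg Subtype.val hEq
    rw [Sym2.eq_iff] at hEq'
    obtain ⟨-, s1, s2, s3⟩ := hspec i t.val t.isLt
    obtain ⟨-, s1', s2', s3'⟩ := hspec i' t'.val t'.isLt
    have hii : i = i' := by
      by_contra hne
      have h1 : (fa i t.val i').val = (fb i t.val i').val :=
        congrArg Fin.val (s3 i' (Ne.symm hne))
      rcases hEq' with ⟨hA, hB⟩ | ⟨hA, hB⟩
      · have c1 : (fa i t.val i').val = (fa i' t'.val i').val :=
          congrArg Fin.val (congrFun hA i')
        have c2 : (fb i t.val i').val = (fb i' t'.val i').val :=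
          congrArg Fin.val (congrFun hB i')
        omega
      · have c1 : (fa i t.val i').val = (fb i' t'.val i').val :=
          congrArg Fin.val (congrFun hA i')
        have c2 : (fb i t.val i').val = (fa i' t'.val i').val :=
          congrArg Fin.val (congrFun hB i')
        omega
    subst hii
    have htt : t.val = t'.val := by
      rcases hEq' with ⟨hA, -⟩ | ⟨hA, hB⟩
      · have c1 : (fa i t.val i).val = (fa i t'.val i).val :=
          congrArg Fin.val (congrFun hA i)
        omega
      · have c1 : (fa i t.val i).val = (fb i t'.val i).val :=
          congrArg Fin.val (congrFun hA i)
        have c2 : (fb i t.val i).val = (fa i t'.val i).val :=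
          congrArg Fin.val (congrFun hB i)
        omega
    have : t = t' := Fin.ext htt
    rw [this]
  haveI : Fintype ↥T.edgeSet := Fintype.ofFinite _
  have hcard1 : Fintype.card (Σ i : Fin k, Fin (n i - 1)) ≤ Fintype.card ↥T.edgeSet :=
    Fintype.card_le_of_injective F hFinj
  have hcard2 : Fintype.card (Σ i : Fin k, Fin (n i - 1)) = NN n := by
    rw [Fintype.card_sigma, NN]
    simp
  have hcard3 : Fintype.card ↥T.edgeSet ≤ m := by
    have : Function.Injective (fun e : ↥T.edgeSet =>
        (⟨c e.val, hb e.val (T.edgeSet_subset e.2)⟩ : Fin m)) := by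
      intro e e' hEq
      exact Subtype.ext (hinj e.2 e'.2 (by simpa [Fin.ext_iff] using hEq))
    have := Fintype.card_le_of_injective _ this
    simpa using this
  omega

end Rx3GridAux

/-- For `k ≥ 2` and paths `P_{n₁}, …, P_{n_k}` with `nᵢ ≥ 2` vertices each,
`rx₃(P_{n₁} □ ⋯ □ P_{n_k}) = (∑ nᵢ) − k`. -/
theorem rx3_boxProdFamily_paths {k : ℕ} (hk : 2 ≤ k) (n : Fin k → ℕ)
    (hn : ∀ i, 2 ≤ n i) :
    rx3 (boxProdFamily fun i => SimpleGraph.pathGraph (n i)) = (∑ i, n i) - k := by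
  classical
  have hmem : Rx3GridAux.NN n ∈ {m | ∃ c : Sym2 (Rx3GridAux.Vtx n) → ℕ,
      (∀ e ∈ (Rx3GridAux.Grid n).edgeSet, c e < m) ∧
        IsRainbowColoring3 (Rx3GridAux.Grid n) c} :=
    ⟨Rx3GridAux.colC n, Rx3GridAux.colC_lt, Rx3GridAux.rainbow hn⟩
  have heq : rx3 (Rx3GridAux.Grid n) = Rx3GridAux.NN n := by
    rw [rx3]
    refine le_antisymm (Nat.sInf_le hmem) (le_csInf ⟨_, hmem⟩ ?_)
    rintro m hm
    exact Rx3GridAux.lower hn m hm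
  have hsum : ∑ i, n i = Rx3GridAux.NN n + k := by
    have h1 : ∑ i, n i = ∑ i, ((n i - 1) + 1) :=
      Finset.sum_congr rfl fun i _ => by have := hn i; omega
    rw [h1, Finset.sum_add_distrib, Rx3GridAux.NN]
    simp [Finset.card_univ]
  rw [show (boxProdFamily fun i => SimpleGraph.pathGraph (n i)) = Rx3GridAux.Grid n from rfl,
    heq]
  omega
end

section
/- Let G and H be connected graphs with |V(G)| = 2 and |V(H)| = t ≥ 2, and suppose at least one of G, H is not complete. Then rx_3(G ∨ H) ≤ min{rc(H) + 3, rx_3(K_{2,t})}. -/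
open SimpleGraph

section Helpers

open Function

lemma subgraph_map_connected {V W : Type*} {G : SimpleGraph V} {G' : SimpleGraph W}
    (f : G →g G') {H : G.Subgraph} (h : H.Connected) : (H.map f).Connected := by
  rw [SimpleGraph.Subgraph.connected_iff'] at h ⊢
  refine Connected.map
    (⟨fun x => ⟨f x.1, ⟨x.1, x.2, rfl⟩⟩, ?_⟩ : H.coe →g (H.map f).coe) ?_ h
  · rintro ⟨u, hu⟩ ⟨v, hv⟩ hadj
    exact ⟨u, v, hadj, rfl, rfl⟩
  · rintro ⟨w, v, hv, rfl⟩
    exact ⟨⟨v, hv⟩, rfl⟩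

lemma subgraph_edgeSet_map {V W : Type*} {G : SimpleGraph V} {G' : SimpleGraph W}
    (f : G →g G') (H : G.Subgraph) : (H.map f).edgeSet = Sym2.map f '' H.edgeSet := by
  ext e
  induction e with
  | _ x y =>
    simp only [Subgraph.mem_edgeSet, Subgraph.map_adj, Relation.Map, Set.mem_image]
    constructor
    · rintro ⟨u, v, h, rfl, rfl⟩
      exact ⟨s(u, v), h, rfl⟩
    · rintro ⟨e', he', hmap⟩
      induction e' with
      | _ u v =>
        rw [Sym2.map_pair_eq, Sym2.eq_iff] at hmap
        rcases hmap with ⟨h1, h2⟩ | ⟨h1, h2⟩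
        · exact ⟨u, v, he', h1, h2⟩
        · exact ⟨v, u, he'.symm, h2, h1⟩

lemma small_set_subset_triple {γ : Type*} [Nonempty γ] {s : Set γ} (hfin : s.Finite)
    (h : s.ncard ≤ 3) : ∃ a b c : γ, s ⊆ {a, b, c} := by
  lift s to Finset γ using hfin
  rw [Set.ncard_coe_finset] at h
  classical
  have h0 : s.card = 0 ∨ s.card = 1 ∨ s.card = 2 ∨ s.card = 3 := by omega
  rcases h0 with h0 | h0 | h0 | h0
  · rw [Finset.card_eq_zero] at h0; subst h0
    exact ⟨Classical.arbitrary γ, Classical.arbitrary γ, Classical.arbitrary γ, by simp⟩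
  · obtain ⟨a, rfl⟩ := Finset.card_eq_one.mp h0
    exact ⟨a, a, a, by intro x hx; simp at hx ⊢; tauto⟩
  · obtain ⟨a, b, -, rfl⟩ := Finset.card_eq_two.mp h0
    exact ⟨a, b, b, by intro x hx; simp at hx ⊢; tauto⟩
  · obtain ⟨a, b, c, -, -, -, rfl⟩ := Finset.card_eq_three.mp h0
    exact ⟨a, b, c, by intro x hx; simp at hx ⊢; tauto⟩

lemma rx3_set_nonempty {V : Type*} [Fintype V] (G : SimpleGraph V) (hc : G.Connected) :
    {n | ∃ c : Sym2 V → ℕ, (∀ e ∈ G.edgeSet, c e < n) ∧ IsRainbowColoring3 G c}.Nonempty := by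
  classical
  refine ⟨Fintype.card (Sym2 V), fun e => (Fintype.equivFin (Sym2 V) e).val,
    fun e _ => (Fintype.equivFin (Sym2 V) e).isLt, ?_⟩
  intro S hS
  refine ⟨⊤, ?_, by simp, fun x _ y _ h => ?_⟩
  · exact ⟨Connected.map Subgraph.topIso.symm.toHom
      Subgraph.topIso.symm.toEquiv.surjective hc⟩
  · exact (Fintype.equivFin (Sym2 V)).injective (Fin.val_injective h)

lemma rc_set_nonempty {V : Type*} [Fintype V] (H : SimpleGraph V) (hc : H.Connected) :
    {n | ∃ c : Sym2 V → ℕ, (∀ e ∈ H.edgeSet, c e < n) ∧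
      ∀ u v : V, ∃ p : H.Walk u v, p.IsPath ∧ (p.edges.map c).Nodup}.Nonempty := by
  classical
  refine ⟨Fintype.card (Sym2 V), fun e => (Fintype.equivFin (Sym2 V) e).val,
    fun e _ => (Fintype.equivFin (Sym2 V) e).isLt, fun u v => ?_⟩
  obtain ⟨w⟩ := hc.preconnected u v
  refine ⟨w.toPath, w.toPath.2, ?_⟩
  exact (w.toPath.2.edges_nodup).map
    (fun x y h => (Fintype.equivFin (Sym2 V)).injective (Fin.val_injective h))

end Helpers

/-- For connected graphs `G` and `H` with `|V(G)| = 2` and `|V(H)| = t ≥ 2`, at least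
one of which is not complete, `rx₃(G ∨ H) ≤ min {rc(H) + 3, rx₃(K_{2,t})}`. -/
theorem rx3_join_two_le {α β : Type*} [Fintype α] [Fintype β]
    (G : SimpleGraph α) (H : SimpleGraph β) (hG : G.Connected) (hH : H.Connected)
    (hα : Fintype.card α = 2) (hβ : 2 ≤ Fintype.card β)
    (hnc : G ≠ ⊤ ∨ H ≠ ⊤) :
    rx3 (joinGraph G H) ≤
      min (rcIndex H + 3)
        (rx3 (completeBipartiteGraph (Fin 2) (Fin (Fintype.card β)))) := by
  classical
  have hβ0 : 0 < Fintype.card β := by omega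
  have : Nonempty β := Fintype.card_pos_iff.mp hβ0
  -- two distinct vertices of α
  obtain ⟨a, b, hab, huniv⟩ : ∃ a b : α, a ≠ b ∧ ({a, b} : Set α) = Set.univ := by
    have := (Nat.card_eq_two_iff (α := α)).mp (by rw [Nat.card_eq_fintype_card]; exact hα)
    exact this
  have hall : ∀ x : α, x = a ∨ x = b := by
    intro x
    have : x ∈ ({a, b} : Set α) := huniv ▸ Set.mem_univ x
    simpa using this
  have hGab : G.Adj a b := by
    obtain ⟨w⟩ := hG.preconnected a b
    cases w with
    | nil => exact absurd rfl hab
    | cons h q =>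
      rcases hall _ with h1 | h1
      · exact absurd h1.symm h.ne
      · rwa [h1] at h
  refine le_min ?_ ?_
  · -- Part 1 : rx3 (join) ≤ rcIndex H + 3
    obtain ⟨cH, hcH, hpaths⟩ : rcIndex H ∈ {n | ∃ c : Sym2 β → ℕ,
        (∀ e ∈ H.edgeSet, c e < n) ∧
        ∀ u v : β, ∃ p : H.Walk u v, p.IsPath ∧ (p.edges.map c).Nodup} :=
      Nat.sInf_mem (rc_set_nonempty H hH)
    set rc := rcIndex H with hrcdef
    -- the coloring
    set f1 : α ⊕ β → α ⊕ β → ℕ := fun x y =>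
      match x, y with
      | .inl _, .inl _ => rc + 2
      | .inr u, .inr v => cH s(u, v)
      | .inl x, .inr _ => if x = a then rc else rc + 1
      | .inr _, .inl x => if x = a then rc else rc + 1
      with hf1def
    have hf1symm : ∀ x y, f1 x y = f1 y x := by
      rintro (x | x) (y | y) <;> simp [hf1def, Sym2.eq_swap]
    set c1 : Sym2 (α ⊕ β) → ℕ := Sym2.lift ⟨f1, hf1symm⟩ with hc1def
    have hc1mk : ∀ x y, c1 s(x, y) = f1 x y := fun x y => Sym2.lift_mk _ x y
    apply Nat.sInf_le
    refine ⟨c1, ?_, ?_⟩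
    · -- bound
      intro e he
      induction e with
      | _ x y =>
        rw [SimpleGraph.mem_edgeSet] at he
        rcases x with x | x <;> rcases y with y | y
        · rw [hc1mk]; show rc + 2 < rc + 3; omega
        · rw [hc1mk]; show (if x = a then rc else rc + 1) < rc + 3; split <;> omega
        · rw [hc1mk]; show (if y = a then rc else rc + 1) < rc + 3; split <;> omega
        · rw [hc1mk]
          have : s(x, y) ∈ H.edgeSet := he
          have := hcH _ this
          show cH s(x, y) < rc + 3
          omega
    · -- rainbow property
      intro S hS
      have hSβ : (Sum.inr ⁻¹' S : Set β).ncard ≤ 3 := by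
        have hsub : (Sum.inr '' (Sum.inr ⁻¹' S) : Set (α ⊕ β)) ⊆ S :=
          Set.image_preimage_subset _ _
        calc (Sum.inr ⁻¹' S : Set β).ncard
            = (Sum.inr '' (Sum.inr ⁻¹' S) : Set (α ⊕ β)).ncard :=
              (Set.ncard_image_of_injective _ Sum.inr_injective).symm
          _ ≤ S.ncard := Set.ncard_le_ncard hsub (Set.toFinite S)
          _ ≤ 3 := hS
      obtain ⟨h1, h2, h3, hsub3⟩ := small_set_subset_triple (Set.toFinite _) hSβ
      obtain ⟨p, hp, hnodup⟩ := hpaths h1 h2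
      -- graph homomorphism inr
      set ι : H →g joinGraph G H := ⟨Sum.inr, fun {u v} h => h⟩ with hιdef
      have hJbh1 : (joinGraph G H).Adj (.inl b) (.inr h1) := trivial
      have hJab : (joinGraph G H).Adj (.inl a) (.inl b) := hGab
      have hJah3 : (joinGraph G H).Adj (.inl a) (.inr h3) := trivial
      set A := p.toSubgraph.map ι with hAdef
      set B := (joinGraph G H).subgraphOfAdj hJbh1 with hBdef
      set C := (joinGraph G H).subgraphOfAdj hJab with hCdef
      set D := (joinGraph G H).subgraphOfAdj hJah3 with hDdef
      refine ⟨(A ⊔ B) ⊔ (C ⊔ D), ?_, ?_, ?_⟩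
      · -- connected
        have hA : A.Connected := subgraph_map_connected ι p.toSubgraph_connected
        have hAB : (A ⊔ B).Connected := by
          refine Subgraph.connected_sup hA.preconnected (Subgraph.subgraphOfAdj_connected hJbh1).preconnected ⟨.inr h1, ?_⟩
          rw [Subgraph.verts_inf]
          exact ⟨⟨h1, p.start_mem_verts_toSubgraph, rfl⟩, by simp [hBdef]⟩
        have hCD : (C ⊔ D).Connected := by
          refine Subgraph.connected_sup (Subgraph.subgraphOfAdj_connected hJab).preconnected (Subgraph.subgraphOfAdj_connected hJah3).preconnected
            ⟨.inl a, ?_⟩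
          rw [Subgraph.verts_inf]
          exact ⟨by simp [hCdef], by simp [hDdef]⟩
        refine Subgraph.connected_sup hAB.preconnected hCD.preconnected ⟨.inl b, ?_⟩
        rw [Subgraph.verts_inf]
        constructor
        · rw [Subgraph.verts_sup]
          exact Or.inr (by simp [hBdef])
        · rw [Subgraph.verts_sup]
          exact Or.inl (by simp [hCdef])
      · -- S ⊆ verts
        intro x hx
        simp only [Subgraph.verts_sup, Set.mem_union, hAdef, Subgraph.map_verts, hBdef,
          hCdef, hDdef, subgraphOfAdj_verts, Set.mem_insert_iff, Set.mem_singleton_iff]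
        rcases x with x | x
        · rcases hall x with rfl | rfl
          · exact Or.inr (Or.inl (Or.inl rfl))
          · exact Or.inr (Or.inl (Or.inr rfl))
        · have hx3 : x ∈ ({h1, h2, h3} : Set β) := hsub3 hx
          rcases hx3 with rfl | rfl | rfl
          · exact Or.inl (Or.inr (Or.inr rfl))
          · exact Or.inl (Or.inl ⟨x, p.end_mem_verts_toSubgraph, rfl⟩)
          · exact Or.inr (Or.inr (Or.inr rfl))
      · -- injective on edges
        have hAedge : ∀ e ∈ A.edgeSet,
            ∃ e' : Sym2 β, e' ∈ p.edges ∧ e = Sym2.map Sum.inr e' ∧ c1 e = cH e' := by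
          intro e he
          rw [hAdef, subgraph_edgeSet_map, Walk.edgeSet_toSubgraph] at he
          obtain ⟨e', he', rfl⟩ := he
          refine ⟨e', he', rfl, ?_⟩
          induction e' with
          | _ u v => rw [Sym2.map_pair_eq]; exact hc1mk _ _
        have hAlt : ∀ e ∈ A.edgeSet, c1 e < rc := by
          intro e he
          obtain ⟨e', he', rfl, hval⟩ := hAedge e he
          rw [hval]
          exact hcH _ (p.edges_subset_edgeSet he')
        have hBv : c1 s(.inl b, .inr h1) = rc + 1 := by
          rw [hc1mk]
          exact if_neg (fun h => hab h.symm)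
        have hCv : c1 s(.inl a, .inl b) = rc + 2 := hc1mk _ _
        have hDv : c1 s(.inl a, .inr h3) = rc := by
          rw [hc1mk]; exact if_pos rfl
        intro e1 he1 e2 he2 heq
        simp only [Subgraph.edgeSet_sup, Set.mem_union, hBdef, hCdef, hDdef,
          edgeSet_subgraphOfAdj, Set.mem_singleton_iff] at he1 he2
        rcases he1 with (h1e | rfl) | (rfl | rfl) <;>
          rcases he2 with (h2e | rfl) | (rfl | rfl)
        · obtain ⟨e1', hm1, rfl, hv1⟩ := hAedge _ h1e
          obtain ⟨e2', hm2, rfl, hv2⟩ := hAedge _ h2e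
          rw [hv1, hv2] at heq
          rw [List.inj_on_of_nodup_map hnodup hm1 hm2 heq]
        · exact absurd heq (by have := hAlt _ h1e; rw [hBv]; omega)
        · exact absurd heq (by have := hAlt _ h1e; rw [hCv]; omega)
        · exact absurd heq (by have := hAlt _ h1e; rw [hDv]; omega)
        · exact absurd heq.symm (by have := hAlt _ h2e; rw [hBv]; omega)
        · rfl
        · exact absurd heq (by rw [hBv, hCv]; omega)
        · exact absurd heq (by rw [hBv, hDv]; omega)
        · exact absurd heq.symm (by have := hAlt _ h2e; rw [hCv]; omega)
        · exact absurd heq (by rw [hCv, hBv]; omega)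
        · rfl
        · exact absurd heq (by rw [hCv, hDv]; omega)
        · exact absurd heq.symm (by have := hAlt _ h2e; rw [hDv]; omega)
        · exact absurd heq (by rw [hDv, hBv]; omega)
        · exact absurd heq (by rw [hDv, hCv]; omega)
        · rfl
  · -- Part 2 : rx3 (join) ≤ rx3 (K_{2,t})
    set K := completeBipartiteGraph (Fin 2) (Fin (Fintype.card β)) with hKdef
    have hKconn : K.Connected := by
      rw [connected_iff]
      refine ⟨?_, ⟨.inl 0⟩⟩
      have hadj : ∀ (i : Fin 2) (j : Fin (Fintype.card β)), K.Adj (.inl i) (.inr j) :=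
        fun i j => by simp [hKdef]
      intro x y
      rcases x with x | x <;> rcases y with y | y
      · exact ((hadj x ⟨0, hβ0⟩).reachable).trans ((hadj y ⟨0, hβ0⟩).reachable.symm)
      · exact (hadj x y).reachable
      · exact (hadj y x).reachable.symm
      · exact ((hadj 0 x).reachable.symm).trans ((hadj 0 y).reachable)
    obtain ⟨c', hlt, hrb⟩ : rx3 K ∈ {n | ∃ c : Sym2 (Fin 2 ⊕ Fin (Fintype.card β)) → ℕ,
        (∀ e ∈ K.edgeSet, c e < n) ∧ IsRainbowColoring3 K c} :=
      Nat.sInf_mem (rx3_set_nonempty K hKconn)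
    set m := rx3 K with hmdef
    have hm1 : 1 ≤ m := by
      have hedge : s(Sum.inl 0, Sum.inr ⟨0, hβ0⟩) ∈ K.edgeSet := by
        rw [SimpleGraph.mem_edgeSet]; simp [hKdef]
      have := hlt _ hedge
      omega
    set eα : α ≃ Fin 2 := Fintype.equivFinOfCardEq hα with heαdef
    set eβ : β ≃ Fin (Fintype.card β) := Fintype.equivFin β with heβdef
    set φ : α ⊕ β → Fin 2 ⊕ Fin (Fintype.card β) := Sum.map ⇑eα ⇑eβ with hφdef
    set ψ : Fin 2 ⊕ Fin (Fintype.card β) → α ⊕ β := Sum.map ⇑eα.symm ⇑eβ.symm with hψdef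
    have hψφ : ∀ x, ψ (φ x) = x := by rintro (x | x) <;> simp [hφdef, hψdef]
    have hφψ : ∀ x, φ (ψ x) = x := by rintro (x | x) <;> simp [hφdef, hψdef]
    have hφinj : Function.Injective φ := fun x y h => by
      rw [← hψφ x, h, hψφ]
    have hmapψ : ∀ e, Sym2.map φ (Sym2.map ψ e) = e := by
      intro e
      induction e with
      | _ x y => simp [Sym2.map_pair_eq, hφψ]
    -- the homomorphism from K to the join
    have hψhom : ∀ {x y}, K.Adj x y → (joinGraph G H).Adj (ψ x) (ψ y) := by
      rintro (x | x) (y | y) h <;> simp [hKdef] at h <;> trivial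
    set f : K →g joinGraph G H := ⟨ψ, hψhom⟩ with hfdef
    set c2 : Sym2 (α ⊕ β) → ℕ := fun e => min (c' (Sym2.map φ e)) (m - 1) with hc2def
    apply Nat.sInf_le
    refine ⟨c2, fun e _ => ?_, ?_⟩
    · exact lt_of_le_of_lt (min_le_right (c' (Sym2.map φ e)) (m - 1)) (by omega)
    · intro S hS
      have hS' : (φ '' S).ncard ≤ 3 := by
        rw [Set.ncard_image_of_injective _ hφinj]; exact hS
      obtain ⟨T', hT'conn, hT'sub, hT'inj⟩ := hrb (φ '' S) hS'
      refine ⟨T'.map f, subgraph_map_connected f hT'conn, ?_, ?_⟩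
      · intro x hx
        refine ⟨φ x, hT'sub ⟨x, hx, rfl⟩, hψφ x⟩
      · have hval : ∀ e' ∈ T'.edgeSet,
            min (c' (Sym2.map φ (Sym2.map (⇑f) e'))) (m - 1) = c' e' := by
          intro e' he'
          have h1 : Sym2.map (⇑f) e' = Sym2.map ψ e' := rfl
          rw [h1, hmapψ]
          have := hlt _ (T'.edgeSet_subset he')
          omega
        rw [subgraph_edgeSet_map]
        rintro e1 ⟨e1', he1', rfl⟩ e2 ⟨e2', he2', rfl⟩ heq
        have hd : e1' = e2' := by
          apply hT'inj he1' he2'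
          rw [← hval _ he1', ← hval _ he2']
          exact heq
        rw [hd]
end

section
/- Let G and H be connected graphs with |V(G)| = s and |V(H)| = t, where 3 ≤ s ≤ t, and suppose at least one of G, H is not complete. Then rx_3(G ∨ H) ≤ min{max{rx_3(G), rx_3(H)} + 1, rx_3(K_{s,t})}. -/
open SimpleGraph

section Aux

variable {V W : Type*} {G₀ : SimpleGraph V} {J : SimpleGraph W}

/-- Pushforward of a subgraph along a map whose restriction maps edges to edges. -/
def pushSubgraph (g : V → W) (T : G₀.Subgraph)
    (h : ∀ a b, T.Adj a b → J.Adj (g a) (g b)) : J.Subgraph where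
  verts := g '' T.verts
  Adj x y := ∃ a b, T.Adj a b ∧ g a = x ∧ g b = y
  adj_sub := by rintro x y ⟨a, b, hab, rfl, rfl⟩; exact h a b hab
  edge_vert := by rintro x y ⟨a, b, hab, rfl, rfl⟩; exact ⟨a, T.edge_vert hab, rfl⟩
  symm := by constructor; rintro x y ⟨a, b, hab, rfl, rfl⟩; exact ⟨b, a, hab.symm, rfl, rfl⟩

lemma pushSubgraph_verts (g : V → W) (T : G₀.Subgraph)
    (h : ∀ a b, T.Adj a b → J.Adj (g a) (g b)) :
    (pushSubgraph g T h).verts = g '' T.verts := rfl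

lemma pushSubgraph_connected (g : V → W) (hg : Function.Injective g) (T : G₀.Subgraph)
    (h : ∀ a b, T.Adj a b → J.Adj (g a) (g b)) (hT : T.Connected) :
    (pushSubgraph g T h).Connected := by
  rw [SimpleGraph.Subgraph.connected_iff'] at hT ⊢
  have hbij : Function.Bijective
      (fun x : T.verts => (⟨g x.1, ⟨x.1, x.2, rfl⟩⟩ : (pushSubgraph g T h).verts)) := by
    constructor
    · intro x y hxy
      exact Subtype.ext (hg (congrArg Subtype.val hxy))
    · rintro ⟨w, a, ha, rfl⟩
      exact ⟨⟨a, ha⟩, rfl⟩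
  refine (SimpleGraph.Iso.connected_iff ?_).mp hT
  refine ⟨Equiv.ofBijective _ hbij, ?_⟩
  rintro ⟨x, hx⟩ ⟨y, hy⟩
  simp only [Equiv.ofBijective_apply, SimpleGraph.Subgraph.coe_adj]
  constructor
  · rintro ⟨a, b, hab, ha, hb⟩
    obtain rfl := hg ha
    obtain rfl := hg hb
    exact hab
  · intro hxy
    exact ⟨x, y, hxy, rfl, rfl⟩

lemma pushSubgraph_edgeSet (g : V → W) (T : G₀.Subgraph)
    (h : ∀ a b, T.Adj a b → J.Adj (g a) (g b)) :
    (pushSubgraph g T h).edgeSet = Sym2.map g '' T.edgeSet := by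
  ext e
  induction e using Sym2.ind with
  | _ x y =>
    simp only [SimpleGraph.Subgraph.mem_edgeSet, Set.mem_image]
    constructor
    · rintro ⟨a, b, hab, rfl, rfl⟩
      exact ⟨s(a, b), hab, by rw [Sym2.map_pair_eq]⟩
    · rintro ⟨e', he', hmap⟩
      induction e' using Sym2.ind with
      | _ a b =>
        rw [Sym2.map_pair_eq, Sym2.eq_iff] at hmap
        rcases hmap with ⟨rfl, rfl⟩ | ⟨rfl, rfl⟩
        · exact ⟨a, b, he', rfl, rfl⟩
        · exact ⟨b, a, he'.symm, rfl, rfl⟩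

lemma rx3_mem {V : Type*} [Fintype V] (G : SimpleGraph V) (hG : G.Connected) :
    rx3 G ∈ {n | ∃ c : Sym2 V → ℕ, (∀ e ∈ G.edgeSet, c e < n) ∧ IsRainbowColoring3 G c} := by
  classical
  apply Nat.sInf_mem
  refine ⟨Fintype.card (Sym2 V), fun e => (Fintype.equivFin (Sym2 V) e : ℕ), fun e _ => ?_, ?_⟩
  · exact (Fintype.equivFin (Sym2 V) e).isLt
  · intro S _
    refine ⟨⊤, ?_, by simp, ?_⟩
    · rw [SimpleGraph.Subgraph.connected_iff']
      exact (SimpleGraph.Iso.connected_iff SimpleGraph.Subgraph.topIso).mpr hG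
    · exact fun e1 _ e2 _ h =>
        (Fintype.equivFin (Sym2 V)).injective (Fin.val_injective h)

lemma injOn_union_single {c : Sym2 W → ℕ} {E : Set (Sym2 W)} {e0 : Sym2 W}
    (hE : Set.InjOn c E) (hlt : ∀ e ∈ E, c e < c e0) :
    Set.InjOn c (E ∪ {e0}) := by
  rintro e1 (h1 | h1) e2 (h2 | h2) h
  · exact hE h1 h2 h
  · rw [Set.mem_singleton_iff] at h2; subst h2
    exact absurd h (hlt e1 h1).ne
  · rw [Set.mem_singleton_iff] at h1; subst h1
    exact absurd h.symm (hlt e2 h2).ne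
  · rw [Set.mem_singleton_iff] at h1 h2; rw [h1, h2]

lemma cbg_connected {V W : Type*} [Nonempty V] [Nonempty W] :
    (completeBipartiteGraph V W).Connected := by
  rw [SimpleGraph.connected_iff]
  have h1 : ∀ (a : V) (b : W), (completeBipartiteGraph V W).Adj (Sum.inl a) (Sum.inr b) := by
    simp
  obtain ⟨v⟩ := ‹Nonempty V›
  obtain ⟨w⟩ := ‹Nonempty W›
  constructor
  · rintro (a | b) (a' | b')
    · exact (h1 a w).reachable.trans (h1 a' w).symm.reachable
    · exact (h1 a b').reachable
    · exact (h1 a' b).symm.reachable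
    · exact ((h1 v b).symm.reachable).trans (h1 v b').reachable
  · infer_instance

end Aux

/-- For connected graphs `G` and `H` with `|V(G)| = s`, `|V(H)| = t`, `3 ≤ s ≤ t`,
at least one of which is not complete,
`rx₃(G ∨ H) ≤ min {max {rx₃(G), rx₃(H)} + 1, rx₃(K_{s,t})}`. -/
theorem rx3_join_le {α β : Type*} [Fintype α] [Fintype β]
    (G : SimpleGraph α) (H : SimpleGraph β) (hG : G.Connected) (hH : H.Connected)
    (hα : 3 ≤ Fintype.card α) (hαβ : Fintype.card α ≤ Fintype.card β)
    (hnc : G ≠ ⊤ ∨ H ≠ ⊤) :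
    rx3 (joinGraph G H) ≤
      min (max (rx3 G) (rx3 H) + 1)
        (rx3 (completeBipartiteGraph (Fin (Fintype.card α)) (Fin (Fintype.card β)))) := by
  classical
  haveI : Nonempty (Fin (Fintype.card α)) := ⟨⟨0, by omega⟩⟩
  haveI : Nonempty (Fin (Fintype.card β)) := ⟨⟨0, by omega⟩⟩
  refine le_min ?_ ?_
  · -- rx3 (G ∨ H) ≤ max (rx3 G) (rx3 H) + 1
    obtain ⟨cG, hcG, hrG⟩ := rx3_mem G hG
    obtain ⟨cH, hcH, hrH⟩ := rx3_mem H hH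
    set M := max (rx3 G) (rx3 H) with hM
    set c : Sym2 (α ⊕ β) → ℕ := Sym2.lift ⟨fun x y =>
        match x, y with
        | Sum.inl a, Sum.inl b => cG s(a, b)
        | Sum.inr a, Sum.inr b => cH s(a, b)
        | _, _ => M,
      by rintro (a | a) (b | b) <;> dsimp only <;> first | rfl | rw [Sym2.eq_swap]⟩ with hc
    have hcll : ∀ a b : α, c s(Sum.inl a, Sum.inl b) = cG s(a, b) := fun a b => rfl
    have hcrr : ∀ a b : β, c s(Sum.inr a, Sum.inr b) = cH s(a, b) := fun a b => rfl
    have hclr : ∀ (a : α) (b : β), c s(Sum.inl a, Sum.inr b) = M := fun a b => rfl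
    have hcrl : ∀ (b : β) (a : α), c s(Sum.inr b, Sum.inl a) = M := fun b a => rfl
    have hmapl : ∀ e : Sym2 α, c (Sym2.map Sum.inl e) = cG e := by
      intro e
      induction e using Sym2.ind with
      | _ a b => rw [Sym2.map_pair_eq]; exact hcll a b
    have hmapr : ∀ e : Sym2 β, c (Sym2.map Sum.inr e) = cH e := by
      intro e
      induction e using Sym2.ind with
      | _ a b => rw [Sym2.map_pair_eq]; exact hcrr a b
    refine Nat.sInf_le ⟨c, ?_, ?_⟩
    · intro e he
      induction e using Sym2.ind with
      | _ x y =>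
        rw [SimpleGraph.mem_edgeSet] at he
        rcases x with a | a <;> rcases y with b | b
        · have hab : G.Adj a b := he
          calc c s(Sum.inl a, Sum.inl b) = cG s(a, b) := hcll a b
            _ < rx3 G := hcG _ (G.mem_edgeSet.mpr hab)
            _ ≤ M := le_max_left _ _
            _ < M + 1 := Nat.lt_succ_self _
        · rw [hclr]; exact Nat.lt_succ_self _
        · rw [hcrl]; exact Nat.lt_succ_self _
        · have hab : H.Adj a b := he
          calc c s(Sum.inr a, Sum.inr b) = cH s(a, b) := hcrr a b
            _ < rx3 H := hcH _ (H.mem_edgeSet.mpr hab)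
            _ ≤ M := le_max_right _ _
            _ < M + 1 := Nat.lt_succ_self _
    · intro S hS
      set SA := Sum.inl ⁻¹' S with hSAdef
      set SB := Sum.inr ⁻¹' S with hSBdef
      have hSA3 : SA.ncard ≤ 3 := by
        calc SA.ncard = (Sum.inl '' SA).ncard :=
              (Set.ncard_image_of_injective _ Sum.inl_injective).symm
          _ ≤ S.ncard := Set.ncard_le_ncard (Set.image_preimage_subset _ _) S.toFinite
          _ ≤ 3 := hS
      have hSB3 : SB.ncard ≤ 3 := by
        calc SB.ncard = (Sum.inr '' SB).ncard :=
              (Set.ncard_image_of_injective _ Sum.inr_injective).symm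
          _ ≤ S.ncard := Set.ncard_le_ncard (Set.image_preimage_subset _ _) S.toFinite
          _ ≤ 3 := hS
      rcases Set.eq_empty_or_nonempty SB with hSBe | hSBne
      · -- all of S is on the left
        obtain ⟨TG, hTGc, hTGsub, hTGinj⟩ := hrG SA hSA3
        refine ⟨pushSubgraph Sum.inl TG
          (fun a b hab => (TG.adj_sub hab : (joinGraph G H).Adj (Sum.inl a) (Sum.inl b))),
          pushSubgraph_connected _ Sum.inl_injective _ _ hTGc, ?_, ?_⟩
        · rintro (a | b) hx
          · exact ⟨a, hTGsub hx, rfl⟩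
          · have hb : b ∈ SB := hx
            rw [hSBe] at hb
            exact hb.elim
        · erw [pushSubgraph_edgeSet]
          intro x hx y hy hxy
          obtain ⟨e1, he1, rfl⟩ := hx
          obtain ⟨e2, he2, rfl⟩ := hy
          rw [hmapl e1, hmapl e2] at hxy
          rw [hTGinj he1 he2 hxy]
      rcases Set.eq_empty_or_nonempty SA with hSAe | hSAne
      · -- all of S is on the right
        obtain ⟨TH, hTHc, hTHsub, hTHinj⟩ := hrH SB hSB3
        refine ⟨pushSubgraph Sum.inr TH
          (fun a b hab => (TH.adj_sub hab : (joinGraph G H).Adj (Sum.inr a) (Sum.inr b))),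
          pushSubgraph_connected _ Sum.inr_injective _ _ hTHc, ?_, ?_⟩
        · rintro (a | b) hx
          · have ha : a ∈ SA := hx
            rw [hSAe] at ha
            exact ha.elim
          · exact ⟨b, hTHsub hx, rfl⟩
        · erw [pushSubgraph_edgeSet]
          intro x hx y hy hxy
          obtain ⟨e1, he1, rfl⟩ := hx
          obtain ⟨e2, he2, rfl⟩ := hy
          rw [hmapr e1, hmapr e2] at hxy
          rw [hTHinj he1 he2 hxy]
      -- both sides nonempty
      have hsum : SA.ncard + SB.ncard ≤ 3 := by
        have hdisj : Disjoint (Sum.inl '' SA) (Sum.inr '' SB) := by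
          rw [Set.disjoint_left]
          rintro x ⟨a, _, rfl⟩ ⟨b, _, hba⟩
          exact Sum.inl_ne_inr hba.symm
        have hsub : (Sum.inl '' SA) ∪ (Sum.inr '' SB) ⊆ S := by
          rintro x (⟨a, ha, rfl⟩ | ⟨b, hb, rfl⟩)
          exacts [ha, hb]
        calc SA.ncard + SB.ncard
            = (Sum.inl '' SA).ncard + (Sum.inr '' SB).ncard := by
              rw [Set.ncard_image_of_injective _ Sum.inl_injective,
                Set.ncard_image_of_injective _ Sum.inr_injective]
          _ = ((Sum.inl '' SA) ∪ (Sum.inr '' SB)).ncard :=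
              (Set.ncard_union_eq hdisj (Set.toFinite _) (Set.toFinite _)).symm
          _ ≤ S.ncard := Set.ncard_le_ncard hsub S.toFinite
          _ ≤ 3 := hS
      rcases le_or_gt SA.ncard 1 with h1 | h1
      · -- SA is a singleton {a}; use a rainbow tree of H for SB plus one cross edge
        obtain ⟨a, ha⟩ := hSAne
        have hone : ∀ x ∈ SA, x = a := fun x hx => (Set.ncard_le_one SA.toFinite).mp h1 x hx a ha
        obtain ⟨TH, hTHc, hTHsub, hTHinj⟩ := hrH SB hSB3
        obtain ⟨b0, hb0⟩ := hTHc.nonempty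
        have hadj : (joinGraph G H).Adj (Sum.inr b0) (Sum.inl a) := trivial
        refine ⟨pushSubgraph Sum.inr TH
          (fun x y hxy => (TH.adj_sub hxy : (joinGraph G H).Adj (Sum.inr x) (Sum.inr y))) ⊔
          (joinGraph G H).subgraphOfAdj hadj, ?_, ?_, ?_⟩
        · refine SimpleGraph.Subgraph.connected_sup (pushSubgraph_connected _ Sum.inr_injective _ _ hTHc).preconnected
            (SimpleGraph.Subgraph.subgraphOfAdj_connected hadj).preconnected ?_
          refine ⟨Sum.inr b0, ?_⟩
          rw [SimpleGraph.Subgraph.verts_inf]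
          exact ⟨⟨b0, hb0, rfl⟩, by simp⟩
        · rw [SimpleGraph.Subgraph.verts_sup]
          rintro (a' | b') hx
          · have : a' = a := hone a' hx
            subst this
            exact Or.inr (by simp)
          · exact Or.inl ⟨b', hTHsub hx, rfl⟩
        · rw [SimpleGraph.Subgraph.edgeSet_sup, SimpleGraph.edgeSet_subgraphOfAdj]
          apply injOn_union_single
          · erw [pushSubgraph_edgeSet]
            intro x hx y hy hxy
            obtain ⟨e1, he1, rfl⟩ := hx
            obtain ⟨e2, he2, rfl⟩ := hy
            rw [hmapr e1, hmapr e2] at hxy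
            rw [hTHinj he1 he2 hxy]
          · intro e he
            erw [pushSubgraph_edgeSet] at he
            obtain ⟨e', he', rfl⟩ := he
            rw [hmapr e', hcrl b0 a]
            calc cH e' < rx3 H := hcH _ (TH.edgeSet_subset he')
              _ ≤ M := le_max_right _ _
      · -- SB is a singleton {b}; use a rainbow tree of G for SA plus one cross edge
        have h2 : SB.ncard ≤ 1 := by omega
        obtain ⟨b, hb⟩ := hSBne
        have hone : ∀ x ∈ SB, x = b := fun x hx => (Set.ncard_le_one SB.toFinite).mp h2 x hx b hb
        obtain ⟨TG, hTGc, hTGsub, hTGinj⟩ := hrG SA hSA3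
        obtain ⟨a0, ha0⟩ := hTGc.nonempty
        have hadj : (joinGraph G H).Adj (Sum.inl a0) (Sum.inr b) := trivial
        refine ⟨pushSubgraph Sum.inl TG
          (fun x y hxy => (TG.adj_sub hxy : (joinGraph G H).Adj (Sum.inl x) (Sum.inl y))) ⊔
          (joinGraph G H).subgraphOfAdj hadj, ?_, ?_, ?_⟩
        · refine SimpleGraph.Subgraph.connected_sup (pushSubgraph_connected _ Sum.inl_injective _ _ hTGc).preconnected
            (SimpleGraph.Subgraph.subgraphOfAdj_connected hadj).preconnected ?_
          refine ⟨Sum.inl a0, ?_⟩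
          rw [SimpleGraph.Subgraph.verts_inf]
          exact ⟨⟨a0, ha0, rfl⟩, by simp⟩
        · rw [SimpleGraph.Subgraph.verts_sup]
          rintro (a' | b') hx
          · exact Or.inl ⟨a', hTGsub hx, rfl⟩
          · have : b' = b := hone b' hx
            subst this
            exact Or.inr (by simp)
        · rw [SimpleGraph.Subgraph.edgeSet_sup, SimpleGraph.edgeSet_subgraphOfAdj]
          apply injOn_union_single
          · erw [pushSubgraph_edgeSet]
            intro x hx y hy hxy
            obtain ⟨e1, he1, rfl⟩ := hx
            obtain ⟨e2, he2, rfl⟩ := hy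
            rw [hmapl e1, hmapl e2] at hxy
            rw [hTGinj he1 he2 hxy]
          · intro e he
            erw [pushSubgraph_edgeSet] at he
            obtain ⟨e', he', rfl⟩ := he
            rw [hmapl e', hclr a0 b]
            calc cG e' < rx3 G := hcG _ (TG.edgeSet_subset he')
              _ ≤ M := le_max_left _ _
  · -- rx3 (G ∨ H) ≤ rx3 (K_{s,t})
    obtain ⟨cK, hcK, hrK⟩ :=
      rx3_mem (completeBipartiteGraph (Fin (Fintype.card α)) (Fin (Fintype.card β)))
        cbg_connected
    set n := rx3 (completeBipartiteGraph (Fin (Fintype.card α)) (Fin (Fintype.card β)))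
      with hn
    have hnpos : 0 < n := by
      have hadj : (completeBipartiteGraph (Fin (Fintype.card α))
          (Fin (Fintype.card β))).Adj (Sum.inl (Classical.arbitrary _))
          (Sum.inr (Classical.arbitrary _)) := by simp
      have := hcK _ (SimpleGraph.mem_edgeSet _ |>.mpr hadj)
      omega
    set f : (α ⊕ β) ≃ (Fin (Fintype.card α) ⊕ Fin (Fintype.card β)) :=
      Equiv.sumCongr (Fintype.equivFin α) (Fintype.equivFin β) with hf
    set c' : Sym2 (α ⊕ β) → ℕ := fun e =>
      if he : Sym2.map f e ∈
          (completeBipartiteGraph (Fin (Fintype.card α)) (Fin (Fintype.card β))).edgeSet then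
        cK (Sym2.map f e)
      else 0 with hc'
    have hmm : ∀ e : Sym2 (Fin (Fintype.card α) ⊕ Fin (Fintype.card β)),
        Sym2.map f (Sym2.map f.symm e) = e := by
      intro e
      induction e using Sym2.ind with
      | _ x y => rw [Sym2.map_pair_eq, Sym2.map_pair_eq]; simp
    have hc'eq : ∀ e : Sym2 (α ⊕ β),
        Sym2.map f e ∈
          (completeBipartiteGraph (Fin (Fintype.card α)) (Fin (Fintype.card β))).edgeSet →
        c' e = cK (Sym2.map f e) := fun e he => dif_pos he
    refine Nat.sInf_le ⟨c', ?_, ?_⟩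
    · intro e _
      by_cases hm : Sym2.map f e ∈
        (completeBipartiteGraph (Fin (Fintype.card α)) (Fin (Fintype.card β))).edgeSet
      · rw [hc'eq e hm]; exact hcK _ hm
      · have h0 : c' e = 0 := dif_neg hm
        rw [h0]; exact hnpos
    · intro S hS
      have hfS : (f '' S).ncard ≤ 3 := by
        rw [Set.ncard_image_of_injective _ f.injective]; exact hS
      obtain ⟨T, hTc, hTsub, hTinj⟩ := hrK (f '' S) hfS
      have hpush : ∀ x y, T.Adj x y → (joinGraph G H).Adj (f.symm x) (f.symm y) := by
        intro x y hxy
        have hk := T.adj_sub hxy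
        rcases x with x | x <;> rcases y with y | y
        · simp at hk
        · exact (trivial :
            (joinGraph G H).Adj (Sum.inl ((Fintype.equivFin α).symm x))
              (Sum.inr ((Fintype.equivFin β).symm y)))
        · exact (trivial :
            (joinGraph G H).Adj (Sum.inr ((Fintype.equivFin β).symm x))
              (Sum.inl ((Fintype.equivFin α).symm y)))
        · simp at hk
      refine ⟨pushSubgraph (⇑f.symm) T hpush,
        pushSubgraph_connected _ f.symm.injective _ _ hTc, ?_, ?_⟩
      · intro x hx
        exact ⟨f x, hTsub ⟨x, hx, rfl⟩, f.symm_apply_apply x⟩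
      · rw [pushSubgraph_edgeSet]
        intro x hx y hy hxy
        obtain ⟨e1, he1, rfl⟩ := hx
        obtain ⟨e2, he2, rfl⟩ := hy
        have m1 := T.edgeSet_subset he1
        have m2 := T.edgeSet_subset he2
        rw [hc'eq _ (by rw [hmm e1]; exact m1), hc'eq _ (by rw [hmm e2]; exact m2),
          hmm e1, hmm e2] at hxy
        rw [hTinj he1 he2 hxy]
end
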